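/- Let T be a text with distinct suffixes and SA, SA' the suffix arrays of T and T^rev. If all suffixes of T^rev in the interval SA'[s'..e'] share their first t symbols, then the set of positions { SA^{-1}[n - SA'[q] - t + 1] : s' ≤ q ≤ e' } (mapping each occurrence of the reversed prefix back to the corresponding occurrence in T, assuming all these positions are ≥ 1) is a contiguous interval [s..e] in SA of length e'-s'+1, consisting exactly of the suffixes of T that begin with the reversal of that shared prefix. -/
import Mathlib

/-- If `W` is a prefix of `x` and of `z`, and `x ≤ y ≤ z` lexicographically,
then `W` is a prefix of `y`. -/
private lemma prefix_of_between {α : Type*} [LinearOrder α] :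
    ∀ (W : List α) {x y z : List α}, W <+: x → W <+: z → x ≤ y → y ≤ z → W <+: y := by
  intro W
  induction W with
  | nil => intro x y z _ _ _ _; exact List.nil_prefix
  | cons a W ih =>
    intro x y z hx hz hxy hyz
    obtain ⟨x', rfl⟩ := hx
    obtain ⟨z', rfl⟩ := hz
    rw [List.cons_append] at hxy
    rw [List.cons_append] at hyz
    cases y with
    | nil =>
      exact absurd (List.nil_lt_cons a (W ++ x')) (not_lt.2 hxy)
    | cons b y'' =>
      have hab : a ≤ b := not_lt.1 (fun h => (not_lt.2 hxy)
        (show (b :: y'') < a :: (W ++ x') from List.Lex.rel h))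
      have hba : b ≤ a := not_lt.1 (fun h => (not_lt.2 hyz)
        (show a :: (W ++ z') < b :: y'' from List.Lex.rel h))
      have hEq : a = b := le_antisymm hab hba
      subst hEq
      have h1 : (W ++ x') ≤ y'' := not_lt.1 (fun h => (not_lt.2 hxy)
        (show a :: y'' < a :: (W ++ x') from List.Lex.cons h))
      have h2 : y'' ≤ W ++ z' := not_lt.1 (fun h => (not_lt.2 hyz)
        (show a :: (W ++ z') < a :: y'' from List.Lex.cons h))
      have := ih ⟨x', rfl⟩ ⟨z', rfl⟩ h1 h2
      exact List.cons_prefix_cons.2 ⟨rfl, this⟩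

/-- An occurrence of `W.reverse` at position `p` of `T.reverse` corresponds to
an occurrence of `W` at position `n - (p + t)` of `T`. -/
private lemma rev_occ {α : Type*} [LinearOrder α] (T W : List α) (n t p : ℕ)
    (hn : n = T.length) (hWlen : W.length = t) (hpt : p + t ≤ n) :
    W.reverse <+: T.reverse.drop p ↔ W <+: T.drop (n - (p + t)) := by
  have hp : p ≤ n := le_trans (Nat.le_add_right _ _) hpt
  have h1 : T.reverse.drop p = (T.take (n - p)).reverse := by
    rw [List.reverse_take]
    congr 1
    omega
  rw [h1, List.reverse_prefix, List.suffix_iff_eq_drop]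
  have hlen : (T.take (n - p)).length = n - p := by
    rw [List.length_take]; omega
  rw [hlen, hWlen, List.drop_take]
  have ht' : (n - p) - ((n - p) - t) = t := by omega
  rw [ht']
  have hidx : n - p - t = n - (p + t) := by omega
  rw [hidx, List.prefix_iff_eq_take, hWlen]

/-- mapping a suffix-array interval of `T.reverse` (consisting of
all suffixes having the length-`t` string `W.reverse` as a prefix) back to the
suffix array of `T` via `q ↦ SA⁻¹[n - SA'[q] - t]` yields a contiguous interval
`[s..e]` of the same length, consisting exactly of the (ranks of) suffixes of
`T` that begin with `W`. -/
theorem reverse_interval_maps_to_interval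
    {α : Type*} [LinearOrder α] (T : List α) (n t : ℕ) (hn : n = T.length)
    (ht : 0 < t)
    (SA ISA SA' : ℕ → ℕ) (s' e' : ℕ)
    (hbij : Set.BijOn SA (Set.Iio n) (Set.Iio n))
    (hsort : ∀ a b : ℕ, a < b → b < n → T.drop (SA a) < T.drop (SA b))
    (hISA : ∀ i, i < n → ISA (SA i) = i ∧ SA (ISA i) = i ∧ ISA i < n)
    (hbij' : Set.BijOn SA' (Set.Iio n) (Set.Iio n))
    (hsort' : ∀ a b : ℕ, a < b → b < n →
      T.reverse.drop (SA' a) < T.reverse.drop (SA' b))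
    (hs'e' : s' ≤ e') (he' : e' < n)
    (W : List α) (hWlen : W.length = t)
    (hfit : SA' s' + t ≤ n)
    (hW : W.reverse = (T.reverse.drop (SA' s')).take t)
    (hInt : ∀ q, q < n →
      ((s' ≤ q ∧ q ≤ e') ↔ W.reverse <+: T.reverse.drop (SA' q))) :
    ∃ s e : ℕ, s ≤ e ∧ e - s = e' - s' ∧
      (Finset.Icc s' e').image (fun q => ISA (n - (SA' q + t)))
        = Finset.Icc s e ∧
      (∀ i, i < n → ((s ≤ i ∧ i ≤ e) ↔ W <+: T.drop (SA i))) := by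
  have htn : t ≤ n := le_trans (Nat.le_add_left _ _) hfit
  set f : ℕ → ℕ := fun q => ISA (n - (SA' q + t)) with hf
  -- basic facts about q ∈ [s', e']
  have hq_facts : ∀ q, s' ≤ q → q ≤ e' →
      SA' q + t ≤ n ∧ f q < n ∧ SA (f q) = n - (SA' q + t) ∧
        W <+: T.drop (SA (f q)) := by
    intro q hq1 hq2
    have hqn : q < n := lt_of_le_of_lt hq2 he'
    have hWq : W.reverse <+: T.reverse.drop (SA' q) := (hInt q hqn).1 ⟨hq1, hq2⟩
    have hSAq : SA' q < n := hbij'.mapsTo (Set.mem_Iio.2 hqn)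
    have hlen := hWq.length_le
    rw [List.length_reverse, hWlen, List.length_drop, List.length_reverse, ← hn] at hlen
    have hfit' : SA' q + t ≤ n := by omega
    have hpref : W <+: T.drop (n - (SA' q + t)) :=
      (rev_occ T W n t (SA' q) hn hWlen hfit').1 hWq
    have hm : n - (SA' q + t) < n := by omega
    obtain ⟨h1, h2, h3⟩ := hISA (n - (SA' q + t)) hm
    refine ⟨hfit', h3, h2, ?_⟩
    rw [h2]; exact hpref
  -- injectivity of f on Icc s' e'
  have hinj : Set.InjOn f (Finset.Icc s' e') := by
    intro q1 hq1 q2 hq2 hfeq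
    simp only [Finset.coe_Icc, Set.mem_Icc] at hq1 hq2
    obtain ⟨hft1, _, hfa1, _⟩ := hq_facts q1 hq1.1 hq1.2
    obtain ⟨hft2, _, hfa2, _⟩ := hq_facts q2 hq2.1 hq2.2
    have : n - (SA' q1 + t) = n - (SA' q2 + t) := by
      rw [← hfa1, ← hfa2, hfeq]
    have hSAeq : SA' q1 = SA' q2 := by omega
    exact hbij'.injOn (Set.mem_Iio.2 (lt_of_le_of_lt hq1.2 he'))
      (Set.mem_Iio.2 (lt_of_le_of_lt hq2.2 he')) hSAeq
  -- surjectivity : every rank whose suffix starts with W is hit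
  have hsurj : ∀ i, i < n → W <+: T.drop (SA i) →
      ∃ q, s' ≤ q ∧ q ≤ e' ∧ f q = i := by
    intro i hi hpref
    have hSAi : SA i < n := hbij.mapsTo (Set.mem_Iio.2 hi)
    have hlen := hpref.length_le
    rw [hWlen, List.length_drop, ← hn] at hlen
    have hfit0 : SA i + t ≤ n := by omega
    set p : ℕ := n - (SA i + t) with hp
    have hpn : p < n := by omega
    obtain ⟨q, hqmem, hSAq⟩ := hbij'.surjOn (Set.mem_Iio.2 hpn)
    have hqn : q < n := Set.mem_Iio.1 hqmem
    have hptn : p + t ≤ n := by omega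
    have hback : n - (SA' q + t) = SA i := by rw [hSAq]; omega
    have hpref' : W <+: T.drop (n - (SA' q + t)) := by rw [hback]; exact hpref
    have hWq : W.reverse <+: T.reverse.drop (SA' q) := by
      refine (rev_occ T W n t (SA' q) hn hWlen ?_).2 hpref'
      rw [hSAq]; omega
    obtain ⟨hq1, hq2⟩ := (hInt q hqn).2 hWq
    obtain ⟨hiq1, _, _⟩ := hISA i hi
    refine ⟨q, hq1, hq2, ?_⟩
    show ISA (n - (SA' q + t)) = i
    rw [hback, hiq1]
  -- the image finset
  set F : Finset ℕ := (Finset.Icc s' e').image f with hF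
  have hne : F.Nonempty := ⟨f s', Finset.mem_image.2 ⟨s', Finset.mem_Icc.2 ⟨le_rfl, hs'e'⟩, rfl⟩⟩
  set s : ℕ := F.min' hne with hs
  set e : ℕ := F.max' hne with he
  have hmemF : ∀ i ∈ F, i < n ∧ W <+: T.drop (SA i) := by
    intro i hiF
    obtain ⟨q, hq, rfl⟩ := Finset.mem_image.1 hiF
    rw [Finset.mem_Icc] at hq
    obtain ⟨_, h2, _, h4⟩ := hq_facts q hq.1 hq.2
    exact ⟨h2, h4⟩
  have hsF : s ∈ F := F.min'_mem hne
  have heF : e ∈ F := F.max'_mem hne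
  obtain ⟨hsn, hsp⟩ := hmemF s hsF
  obtain ⟨hen, hep⟩ := hmemF e heF
  have hle_drop : ∀ a b : ℕ, a ≤ b → b < n → T.drop (SA a) ≤ T.drop (SA b) := by
    intro a b hab hbn
    rcases eq_or_lt_of_le hab with rfl | h
    · exact le_rfl
    · exact (hsort a b h hbn).le
  -- the characterization
  have hchar : ∀ i, i < n → ((s ≤ i ∧ i ≤ e) ↔ W <+: T.drop (SA i)) := by
    intro i hi
    constructor
    · rintro ⟨h1, h2⟩
      exact prefix_of_between W hsp hep (hle_drop s i h1 hi) (hle_drop i e h2 hen)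
    · intro hpref
      obtain ⟨q, hq1, hq2, hfq⟩ := hsurj i hi hpref
      have hiF : i ∈ F := by
        rw [← hfq]; exact Finset.mem_image.2 ⟨q, Finset.mem_Icc.2 ⟨hq1, hq2⟩, rfl⟩
      exact ⟨F.min'_le i hiF, F.le_max' i hiF⟩
  have hse : s ≤ e := F.min'_le e heF
  have hFIcc : F = Finset.Icc s e := by
    ext i
    constructor
    · intro hiF
      exact Finset.mem_Icc.2 ⟨F.min'_le i hiF, F.le_max' i hiF⟩
    · intro hiI
      rw [Finset.mem_Icc] at hiI
      have hi : i < n := lt_of_le_of_lt hiI.2 hen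
      have hpref := (hchar i hi).1 hiI
      obtain ⟨q, hq1, hq2, hfq⟩ := hsurj i hi hpref
      rw [← hfq]
      exact Finset.mem_image.2 ⟨q, Finset.mem_Icc.2 ⟨hq1, hq2⟩, rfl⟩
  have hcard1 : F.card = e' - s' + 1 := by
    rw [hF, Finset.card_image_of_injOn hinj, Nat.card_Icc]
    omega
  have hcard2 : F.card = e - s + 1 := by
    rw [hFIcc, Nat.card_Icc]
    omega
  exact ⟨s, e, hse, by omega, hFIcc, hchar⟩
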